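/- seq-Phragmén satisfies weak support monotonicity without population increase: if a seq-Phragmén winning committee W for election E contains nonempty G, and a voter i with A_i ∩ G = ∅ changes her ballot to A_i ∪ G, then some seq-Phragmén winning committee of the new election intersects G; and if all winning committees of E contain G, then all winning committees of the new election intersect G. -/

import Mathlib

open Finset

variable {C : Type*} [Fintype C] [DecidableEq C]

/-- The seq-Phragmén load that candidate `c` would get, given voter loads `x`:
`(1 + Σ_{i : c ∈ A_i} x_i) / |{i : c ∈ A_i}|`. -/
def phrCandLoad {V : Type*} [Fintype V] (A : V → Finset C) (x : V → ℚ) (c : C) : ℚ :=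
  (1 + ∑ i ∈ univ.filter fun i => c ∈ A i, x i) /
    ((univ.filter fun i : V => c ∈ A i).card : ℚ)

/-- The possible states (committee, voter loads) of seq-Phragmén after `j`
iterations: at each iteration an approved, non-elected candidate of minimal
candidate load is elected, and the loads of its approvers are updated. -/
def seqPhragmenStates {V : Type*} [Fintype V] (A : V → Finset C) :
    ℕ → Set (Finset C × (V → ℚ))
  | 0 => {(∅, fun _ => 0)}
  | j + 1 => {p | ∃ q ∈ seqPhragmenStates A j, ∃ w ∉ q.1,
      (univ.filter fun i : V => w ∈ A i).Nonempty ∧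
      (∀ c ∉ q.1, (univ.filter fun i : V => c ∈ A i).Nonempty →
        phrCandLoad A q.2 w ≤ phrCandLoad A q.2 c) ∧
      p = (insert w q.1, fun i => if w ∈ A i then phrCandLoad A q.2 w else q.2 i)}

/-- `W` is a possible output of seq-Phragmén after `k` iterations. -/
def isSeqPhragmenWinner {V : Type*} [Fintype V] (A : V → Finset C) (k : ℕ)
    (W : Finset C) : Prop :=
  ∃ x : V → ℚ, (W, x) ∈ seqPhragmenStates A k

/-!
Adding the approvals `G` to voter `i` changes only the loads of members of `G`, and for `g ∈ G`
the new load is the mediant of voter `i`'s load and the old load of `g`. Voter loads never exceed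
the load of an electable candidate, so the new load of `g` is at most its old load. Hence a run of
the new election that avoids `G` is a run of the old one, which gives the second claim. For the
first, follow the old run producing `W ⊇ G` in the new election: each step can be copied until
either the old run elects a member of `G` or a member of `G` becomes strictly cheaper in the new
election; at that step the new run elects the cheapest member of `G` instead, and it can then be
completed to `k` winners.
-/

lemma add_div_add_le_div_iff {α : Type*} [Field α] [LinearOrder α] [IsStrictOrderedRing α]
    {a b c d : α} (hb : 0 < b) (hd : 0 < d) :
    (a + c) / (b + d) ≤ c / d ↔ a / b ≤ c / d := by
  rw [div_le_div_iff₀ (by positivity) hd, div_le_div_iff₀ hb hd]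
  constructor <;> intro h <;> linarith

lemma div_le_add_div_add_iff {α : Type*} [Field α] [LinearOrder α] [IsStrictOrderedRing α]
    {a b c d : α} (hb : 0 < b) (hd : 0 < d) :
    a / b ≤ (a + c) / (b + d) ↔ a / b ≤ c / d := by
  rw [div_le_div_iff₀ hb (by positivity), div_le_div_iff₀ hb hd]
  constructor <;> intro h <;> linarith

section SeqPhragmen

omit [Fintype C]

variable {V : Type*} [Fintype V]

def approvers (A : V → Finset C) (c : C) : Finset V :=
  univ.filter fun v => c ∈ A v

@[simp]
lemma mem_approvers {A : V → Finset C} {c : C} {v : V} : v ∈ approvers A c ↔ c ∈ A v := by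
  simp [approvers]

lemma phrCandLoad_eq (A : V → Finset C) (x : V → ℚ) (c : C) :
    phrCandLoad A x c = (1 + ∑ v ∈ approvers A c, x v) / #(approvers A c) :=
  rfl

lemma phrCandLoad_mono (A : V → Finset C) {x y : V → ℚ} (hxy : x ≤ y) (c : C) :
    phrCandLoad A x c ≤ phrCandLoad A y c := by
  rw [phrCandLoad_eq, phrCandLoad_eq]
  gcongr
  exact hxy _

def phrStep (A : V → Finset C) (q : Finset C × (V → ℚ)) (w : C) : Finset C × (V → ℚ) :=
  (insert w q.1, fun v => if w ∈ A v then phrCandLoad A q.2 w else q.2 v)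

def IsPhrChoice (A : V → Finset C) (q : Finset C × (V → ℚ)) (w : C) : Prop :=
  w ∉ q.1 ∧ (approvers A w).Nonempty ∧
    ∀ c ∉ q.1, (approvers A c).Nonempty → phrCandLoad A q.2 w ≤ phrCandLoad A q.2 c

lemma mem_seqPhragmenStates_zero {A : V → Finset C} {p : Finset C × (V → ℚ)} :
    p ∈ seqPhragmenStates A 0 ↔ p = (∅, fun _ => 0) :=
  Iff.rfl

lemma mem_seqPhragmenStates_succ {A : V → Finset C} {j : ℕ} {p : Finset C × (V → ℚ)} :
    p ∈ seqPhragmenStates A (j + 1) ↔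
      ∃ q ∈ seqPhragmenStates A j, ∃ w, IsPhrChoice A q w ∧ p = phrStep A q w := by
  simp only [seqPhragmenStates, Set.mem_ofPred_eq, IsPhrChoice, approvers, phrStep, and_assoc]

lemma card_fst_of_mem_seqPhragmenStates {A : V → Finset C} :
    ∀ {j : ℕ} {p : Finset C × (V → ℚ)}, p ∈ seqPhragmenStates A j → #p.1 = j
  | 0, _, hp => by rw [mem_seqPhragmenStates_zero.1 hp]; rfl
  | j + 1, _, hp => by
    obtain ⟨q, hq, w, ⟨hw, -⟩, rfl⟩ := mem_seqPhragmenStates_succ.1 hp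
    simp [phrStep, card_insert_of_notMem hw, card_fst_of_mem_seqPhragmenStates hq]

lemma approvers_nonempty_of_mem_seqPhragmenStates {A : V → Finset C} :
    ∀ {j : ℕ} {p : Finset C × (V → ℚ)}, p ∈ seqPhragmenStates A j →
      ∀ c ∈ p.1, (approvers A c).Nonempty
  | 0, _, hp => by simp [mem_seqPhragmenStates_zero.1 hp]
  | j + 1, _, hp => by
    obtain ⟨q, hq, w, ⟨-, hw, -⟩, rfl⟩ := mem_seqPhragmenStates_succ.1 hp
    simp only [phrStep, forall_mem_insert]
    exact ⟨hw, approvers_nonempty_of_mem_seqPhragmenStates hq⟩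

lemma le_phrCandLoad_of_mem_seqPhragmenStates {A : V → Finset C} :
    ∀ {j : ℕ} {p : Finset C × (V → ℚ)}, p ∈ seqPhragmenStates A j →
      ∀ c ∉ p.1, (approvers A c).Nonempty → ∀ v, p.2 v ≤ phrCandLoad A p.2 c
  | 0, _, hp => by
    rw [mem_seqPhragmenStates_zero.1 hp]
    intro c _ _ _
    rw [phrCandLoad_eq]
    positivity
  | j + 1, _, hp => by
    obtain ⟨q, hq, w, ⟨hwq, hw, hmin⟩, rfl⟩ := mem_seqPhragmenStates_succ.1 hp
    have hq_le := le_phrCandLoad_of_mem_seqPhragmenStates hq w hwq hw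
    intro c hc hcne v
    have hcq : c ∉ q.1 := fun h => hc (mem_insert_of_mem h)
    have hloads : q.2 ≤ (phrStep A q w).2 := fun v => by
      dsimp only [phrStep]
      split_ifs
      exacts [hq_le v, le_rfl]
    calc (phrStep A q w).2 v ≤ phrCandLoad A q.2 w := by
          dsimp only [phrStep]
          split_ifs
          exacts [le_rfl, hq_le v]
      _ ≤ phrCandLoad A q.2 c := hmin c hcq hcne
      _ ≤ phrCandLoad A (phrStep A q w).2 c := phrCandLoad_mono A hloads c

lemma exists_isPhrChoice {A : V → Finset C} {q : Finset C × (V → ℚ)}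
    (h : ∃ c ∉ q.1, (approvers A c).Nonempty) : ∃ w, IsPhrChoice A q w := by
  obtain ⟨c, hcq, v, hv⟩ := h
  obtain ⟨w, hw, hmin⟩ := exists_min_image ((univ.biUnion A).filter (· ∉ q.1))
    (phrCandLoad A q.2) ⟨c, by simpa [hcq] using ⟨v, mem_approvers.1 hv⟩⟩
  simp only [mem_filter, mem_biUnion, mem_univ, true_and] at hw
  obtain ⟨⟨u, hu⟩, hwq⟩ := hw
  refine ⟨w, hwq, ⟨u, mem_approvers.2 hu⟩, fun d hdq ⟨u', hu'⟩ => hmin d ?_⟩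
  simpa [hdq] using ⟨u', mem_approvers.1 hu'⟩

lemma exists_mem_seqPhragmenStates_superset {A : V → Finset C} {T : Finset C}
    (hT : ∀ c ∈ T, (approvers A c).Nonempty) {j k : ℕ} {p : Finset C × (V → ℚ)}
    (hp : p ∈ seqPhragmenStates A j) (hjk : j ≤ k) (hkT : k ≤ #T) :
    ∃ p' ∈ seqPhragmenStates A k, p.1 ⊆ p'.1 := by
  induction k, hjk using Nat.le_induction with
  | base => exact ⟨p, hp, subset_rfl⟩
  | succ k _ ih =>
    obtain ⟨p', hp', hpp'⟩ := ih (by omega)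
    have hT_not_subset : ¬ T ⊆ p'.1 := fun h => by
      have := card_le_card h
      rw [card_fst_of_mem_seqPhragmenStates hp'] at this
      omega
    obtain ⟨c, hcT, hcp'⟩ := not_subset.1 hT_not_subset
    obtain ⟨w, hw⟩ := exists_isPhrChoice ⟨c, hcp', hT c hcT⟩
    exact ⟨phrStep A p' w, mem_seqPhragmenStates_succ.2 ⟨p', hp', w, hw, rfl⟩,
      hpp'.trans (subset_insert _ _)⟩

end SeqPhragmen

section AddApprovals

variable {V : Type*} [Fintype V] [DecidableEq V] {A : V → Finset C} {G : Finset C} {i : V}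

omit [Fintype C]

lemma approvers_subset_update_union (c : C) :
    approvers A c ⊆ approvers (Function.update A i (A i ∪ G)) c := by
  intro v
  rcases eq_or_ne v i with rfl | hv <;> simp_all

lemma approvers_update_union_of_notMem {c : C} (hc : c ∉ G) :
    approvers (Function.update A i (A i ∪ G)) c = approvers A c := by
  ext v
  rcases eq_or_ne v i with rfl | hv <;> simp [*]

lemma approvers_update_union_of_mem {c : C} (hc : c ∈ G) :
    approvers (Function.update A i (A i ∪ G)) c = insert i (approvers A c) := by
  ext v
  rcases eq_or_ne v i with rfl | hv <;> simp [*]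

lemma phrCandLoad_update_union_of_notMem {c : C} (hc : c ∉ G) (x : V → ℚ) :
    phrCandLoad (Function.update A i (A i ∪ G)) x c = phrCandLoad A x c := by
  rw [phrCandLoad_eq, phrCandLoad_eq, approvers_update_union_of_notMem hc]

lemma phrStep_update_union_of_notMem {w : C} (hw : w ∉ G) (q : Finset C × (V → ℚ)) :
    phrStep (Function.update A i (A i ∪ G)) q w = phrStep A q w := by
  simp only [phrStep, phrCandLoad_update_union_of_notMem hw, ← mem_approvers,
    approvers_update_union_of_notMem hw]

/-- The new load of `c ∈ G` is the mediant of voter `i`'s load and the old load of `c`. -/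
lemma phrCandLoad_update_union_of_mem (hiG : Disjoint (A i) G) {c : C} (hc : c ∈ G)
    (x : V → ℚ) :
    phrCandLoad (Function.update A i (A i ∪ G)) x c =
      (x i + (1 + ∑ v ∈ approvers A c, x v)) / (1 + #(approvers A c)) := by
  have hi : i ∉ approvers A c := fun h => disjoint_left.1 hiG (mem_approvers.1 h) hc
  rw [phrCandLoad_eq, approvers_update_union_of_mem hc, sum_insert hi, card_insert_of_notMem hi]
  push_cast
  ring

lemma phrCandLoad_update_union_le_iff (hiG : Disjoint (A i) G) {c : C} (hc : c ∈ G)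
    (hne : (approvers A c).Nonempty) (x : V → ℚ) :
    phrCandLoad (Function.update A i (A i ∪ G)) x c ≤ phrCandLoad A x c ↔
      x i ≤ phrCandLoad A x c := by
  rw [phrCandLoad_update_union_of_mem hiG hc, phrCandLoad_eq]
  simpa only [div_one] using
    add_div_add_le_div_iff (a := x i) one_pos (Nat.cast_pos.2 hne.card_pos)

lemma le_phrCandLoad_update_union_iff (hiG : Disjoint (A i) G) {c : C} (hc : c ∈ G)
    (hne : (approvers A c).Nonempty) (x : V → ℚ) :
    x i ≤ phrCandLoad (Function.update A i (A i ∪ G)) x c ↔ x i ≤ phrCandLoad A x c := by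
  rw [phrCandLoad_update_union_of_mem hiG hc, phrCandLoad_eq]
  simpa only [div_one] using
    div_le_add_div_add_iff (a := x i) one_pos (Nat.cast_pos.2 hne.card_pos)

lemma IsPhrChoice.update_union_of_notMem {q : Finset C × (V → ℚ)} {w : C}
    (h : IsPhrChoice A q w) (hw : w ∉ G)
    (hwG : ∀ g ∈ G, phrCandLoad (Function.update A i (A i ∪ G)) q.2 w ≤
      phrCandLoad (Function.update A i (A i ∪ G)) q.2 g) :
    IsPhrChoice (Function.update A i (A i ∪ G)) q w := by
  obtain ⟨hwq, hwne, hmin⟩ := h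
  refine ⟨hwq, by rwa [approvers_update_union_of_notMem hw], fun c hcq hcne => ?_⟩
  by_cases hc : c ∈ G
  · exact hwG c hc
  rw [approvers_update_union_of_notMem hc] at hcne
  rw [phrCandLoad_update_union_of_notMem hc, phrCandLoad_update_union_of_notMem hw]
  exact hmin c hcq hcne

lemma IsPhrChoice.update_union_of_mem {q : Finset C × (V → ℚ)} {w g : C}
    (h : IsPhrChoice A q w) (hg : g ∈ G) (hgq : g ∉ q.1)
    (hgG : ∀ g' ∈ G, phrCandLoad (Function.update A i (A i ∪ G)) q.2 g ≤
      phrCandLoad (Function.update A i (A i ∪ G)) q.2 g')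
    (hgw : phrCandLoad (Function.update A i (A i ∪ G)) q.2 g ≤ phrCandLoad A q.2 w) :
    IsPhrChoice (Function.update A i (A i ∪ G)) q g := by
  refine ⟨hgq, by simp [approvers_update_union_of_mem hg], fun c hcq hcne => ?_⟩
  by_cases hc : c ∈ G
  · exact hgG c hc
  rw [approvers_update_union_of_notMem hc] at hcne
  rw [phrCandLoad_update_union_of_notMem hc]
  exact hgw.trans (h.2.2 c hcq hcne)

lemma IsPhrChoice.of_update_union (hiG : Disjoint (A i) G) {j : ℕ}
    {q : Finset C × (V → ℚ)} (hq : q ∈ seqPhragmenStates (Function.update A i (A i ∪ G)) j)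
    {w : C} (h : IsPhrChoice (Function.update A i (A i ∪ G)) q w) (hw : w ∉ G) :
    IsPhrChoice A q w := by
  obtain ⟨hwq, hwne, hmin⟩ := h
  refine ⟨hwq, by rwa [← approvers_update_union_of_notMem hw], fun c hcq hcne => ?_⟩
  rw [← phrCandLoad_update_union_of_notMem hw]
  by_cases hc : c ∈ G
  · have hcne' := hcne.mono (approvers_subset_update_union (G := G) (i := i) c)
    have hi := le_phrCandLoad_of_mem_seqPhragmenStates hq c hcq hcne' i
    rw [le_phrCandLoad_update_union_iff hiG hc hcne] at hi
    exact (hmin c hcq hcne').trans ((phrCandLoad_update_union_le_iff hiG hc hcne q.2).2 hi)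
  · rw [← phrCandLoad_update_union_of_notMem hc]
    exact hmin c hcq (by rwa [approvers_update_union_of_notMem hc])

lemma mem_seqPhragmenStates_of_update_union (hiG : Disjoint (A i) G) :
    ∀ {j : ℕ} {p : Finset C × (V → ℚ)},
      p ∈ seqPhragmenStates (Function.update A i (A i ∪ G)) j → Disjoint p.1 G →
        p ∈ seqPhragmenStates A j
  | 0, _, hp, _ => hp
  | j + 1, _, hp, hpG => by
    obtain ⟨q, hq, w, hw, rfl⟩ := mem_seqPhragmenStates_succ.1 hp
    obtain ⟨hwG, hqG⟩ := disjoint_insert_left.1 hpG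
    rw [phrStep_update_union_of_notMem hwG]
    have hqA := mem_seqPhragmenStates_of_update_union hiG hq hqG
    exact mem_seqPhragmenStates_succ.2 ⟨q, hqA, w, hw.of_update_union hiG hq hwG, rfl⟩

lemma mem_seqPhragmenStates_update_union_or_exists (hiG : Disjoint (A i) G)
    (hG : G.Nonempty) :
    ∀ {j : ℕ} {p : Finset C × (V → ℚ)}, p ∈ seqPhragmenStates A j →
      (Disjoint p.1 G ∧ p ∈ seqPhragmenStates (Function.update A i (A i ∪ G)) j) ∨
        ∃ j' ≤ j, ∃ p' ∈ seqPhragmenStates (Function.update A i (A i ∪ G)) j',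
          (p'.1 ∩ G).Nonempty
  | 0, _, hp => .inl ⟨by simp [mem_seqPhragmenStates_zero.1 hp], hp⟩
  | j + 1, _, hp => by
    obtain ⟨q, hq, w, hw, rfl⟩ := mem_seqPhragmenStates_succ.1 hp
    rcases mem_seqPhragmenStates_update_union_or_exists hiG hG hq with
      ⟨hqG, hq'⟩ | ⟨j', hj', p', hp', hp'G⟩
    swap
    · exact .inr ⟨j', hj'.trans j.le_succ, p', hp', hp'G⟩
    obtain ⟨g, hg, hgmin⟩ :=
      exists_min_image G (phrCandLoad (Function.update A i (A i ∪ G)) q.2) hG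
    by_cases hwg :
        w ∉ G ∧ phrCandLoad A q.2 w ≤ phrCandLoad (Function.update A i (A i ∪ G)) q.2 g
    · obtain ⟨hwG, hwg⟩ := hwg
      refine .inl ⟨disjoint_insert_left.2 ⟨hwG, hqG⟩, ?_⟩
      rw [← phrStep_update_union_of_notMem hwG]
      refine mem_seqPhragmenStates_succ.2
        ⟨q, hq', w, hw.update_union_of_notMem hwG fun g' hg' => ?_, rfl⟩
      rw [phrCandLoad_update_union_of_notMem hwG]
      exact hwg.trans (hgmin g' hg')
    · have hgw :
          phrCandLoad (Function.update A i (A i ∪ G)) q.2 g ≤ phrCandLoad A q.2 w := by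
        by_cases hwG : w ∈ G
        · have hi := le_phrCandLoad_of_mem_seqPhragmenStates hq w hw.1 hw.2.1 i
          exact (hgmin w hwG).trans ((phrCandLoad_update_union_le_iff hiG hwG hw.2.1 q.2).2 hi)
        · exact (not_le.1 fun h => hwg ⟨hwG, h⟩).le
      have hgq : g ∉ q.1 := disjoint_right.1 hqG hg
      exact .inr ⟨j + 1, le_rfl, phrStep (Function.update A i (A i ∪ G)) q g,
        mem_seqPhragmenStates_succ.2 ⟨q, hq', g, hw.update_union_of_mem hg hgq hgmin hgw, rfl⟩,
        g, by simp [phrStep, hg]⟩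

lemma exists_mem_seqPhragmenStates_update_union_inter_nonempty (hiG : Disjoint (A i) G)
    {k : ℕ} {p : Finset C × (V → ℚ)} (hp : p ∈ seqPhragmenStates A k)
    (hpG : (p.1 ∩ G).Nonempty) :
    ∃ p' ∈ seqPhragmenStates (Function.update A i (A i ∪ G)) k, (p'.1 ∩ G).Nonempty := by
  rcases mem_seqPhragmenStates_update_union_or_exists hiG (hpG.mono inter_subset_right) hp with
    ⟨hpG', -⟩ | ⟨j, hjk, p', hp', hp'G⟩
  · exact absurd hpG' (not_disjoint_iff_nonempty_inter.2 hpG)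
  have hT : ∀ c ∈ p.1, (approvers (Function.update A i (A i ∪ G)) c).Nonempty := fun c hc =>
    (approvers_nonempty_of_mem_seqPhragmenStates hp c hc).mono (approvers_subset_update_union c)
  obtain ⟨p'', hp'', hp'p''⟩ := exists_mem_seqPhragmenStates_superset hT hp' hjk
    (card_fst_of_mem_seqPhragmenStates hp).ge
  exact ⟨p'', hp'', hp'G.mono (inter_subset_inter_right hp'p'')⟩

end AddApprovals

theorem seqphragmen_weak_SMWOPI_general {V : Type*} [Fintype V] [DecidableEq V]
    (A : V → Finset C) (k : ℕ)
    (G : Finset C) (hG : G.Nonempty)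
    (i : V) (hiG : A i ∩ G = ∅)
    (W : Finset C) (hW : isSeqPhragmenWinner A k W) (hGW : G ⊆ W) :
    (∃ W' : Finset C, isSeqPhragmenWinner (Function.update A i (A i ∪ G)) k W' ∧
        (W' ∩ G).Nonempty) ∧
    ((∀ W₀ : Finset C, isSeqPhragmenWinner A k W₀ → G ⊆ W₀) →
      ∀ W' : Finset C, isSeqPhragmenWinner (Function.update A i (A i ∪ G)) k W' →
        (W' ∩ G).Nonempty) := by
  rw [← disjoint_iff_inter_eq_empty] at hiG
  obtain ⟨x, hx⟩ := hW
  obtain ⟨g, hg⟩ := hG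
  refine ⟨?_, fun hall W' ⟨x', hx'⟩ => ?_⟩
  · obtain ⟨p', hp', hp'G⟩ := exists_mem_seqPhragmenStates_update_union_inter_nonempty hiG hx
      ⟨g, mem_inter.2 ⟨hGW hg, hg⟩⟩
    exact ⟨p'.1, ⟨p'.2, hp'⟩, hp'G⟩
  · by_contra hW'G
    rw [not_nonempty_iff_eq_empty, ← disjoint_iff_inter_eq_empty] at hW'G
    have hW'A := mem_seqPhragmenStates_of_update_union hiG hx' hW'G
    exact disjoint_left.1 hW'G (hall W' ⟨x', hW'A⟩ hg) hg

/-- seq-Phragmén satisfies weak support monotonicity without population increase. -/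
theorem seqphragmen_weak_SMWOPI {V : Type*} [Fintype V] [DecidableEq V]
    (A : V → Finset C) (k : ℕ) (hk : 1 ≤ k) (hkC : k ≤ Fintype.card C)
    (G : Finset C) (hG : G.Nonempty) (hGk : G.card ≤ k)
    (i : V) (hiG : A i ∩ G = ∅)
    (W : Finset C) (hW : isSeqPhragmenWinner A k W) (hGW : G ⊆ W) :
    (∃ W' : Finset C, isSeqPhragmenWinner (Function.update A i (A i ∪ G)) k W' ∧
        (W' ∩ G).Nonempty) ∧
    ((∀ W₀ : Finset C, isSeqPhragmenWinner A k W₀ → G ⊆ W₀) →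
      ∀ W' : Finset C, isSeqPhragmenWinner (Function.update A i (A i ∪ G)) k W' →
        (W' ∩ G).Nonempty) :=
  seqphragmen_weak_SMWOPI_general A k G hG i hiG W hW hGW
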